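/- Let X be a fractional Brownian motion on [0,1] with Hurst parameter H ∈ (1/4, 1/2) with Cameron–Martin space 𝓗 (completion of span of indicators 1_{[0,t]} under ⟨1_{[0,s]}, 1_{[0,t]}⟩ = R(s,t)). Then for every γ > 1/2 − H, the inclusion of the space C_0^γ of γ-Hölder paths h : [0,1] → ℝ with h(0) = 0 into 𝓗 is a continuous linear embedding: there is a constant C with ‖h‖_𝓗 ≤ C‖h‖_γ for all h ∈ C_0^γ. -/

import Mathlib

open Real MeasureTheory Set intervalIntegral

/-- The fractional Sobolev representation of the squared Cameron–Martin norm of an fBM with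
Hurst parameter `H`: `‖h‖²_𝓗 = (H(1-2H)/2) ∫_{ℝ²} (h̄(x) - h̄(y))² / |x-y|^{2-2H} dx dy`,
where `h̄ = h · 1_{[0,1]}`. -/
noncomputable def cmNormSq (H : ℝ) (h : ℝ → ℝ) : ℝ :=
  H * (1 - 2 * H) / 2 *
    ∫ x : ℝ, ∫ y : ℝ,
      (Set.indicator (Set.Icc (0 : ℝ) 1) h x -
        Set.indicator (Set.Icc (0 : ℝ) 1) h y) ^ 2 / |x - y| ^ (2 - 2 * H)

lemma aux_add_rpow_le {s t q : ℝ} (hs : 0 < s) (ht : 0 < t) (hq : q ≤ 0) :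
    (s + t) ^ (2 * q) ≤ s ^ q * t ^ q := by
  have h1 : (s + t) ^ (2 * q) = ((s + t) ^ (2 : ℝ)) ^ q := by
    rw [← Real.rpow_mul (by positivity)]
  have h2 : ((s + t) ^ (2 : ℝ)) ^ q ≤ (s * t) ^ q := by
    apply Real.rpow_le_rpow_of_nonpos (by positivity) ?_ hq
    rw [show (2:ℝ) = ((2:ℕ):ℝ) by norm_num, Real.rpow_natCast]
    nlinarith
  rw [h1]
  calc ((s + t) ^ (2 : ℝ)) ^ q ≤ (s * t) ^ q := h2
    _ = s ^ q * t ^ q := Real.mul_rpow hs.le ht.le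

lemma aux_tail_Iio (x c p : ℝ) (hp : p < -1) (hx : c < x) :
    IntegrableOn (fun y : ℝ => (x - y) ^ p) (Iio c) volume ∧
      ∫ y in Iio c, (x - y) ^ p = (x - c) ^ (p + 1) / (-(p + 1)) := by
  have hmp : MeasurePreserving (fun y : ℝ => x - y) volume volume :=
    Measure.measurePreserving_sub_left volume x
  have hemb : MeasurableEmbedding (fun y : ℝ => x - y) :=
    (MeasurableEquiv.subLeft x).measurableEmbedding
  have hpre : (fun y : ℝ => x - y) ⁻¹' (Ioi (x - c)) = Iio c := by
    ext y
    simp only [mem_preimage, mem_Ioi, mem_Iio]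
    constructor <;> intro <;> linarith
  constructor
  · have := (hmp.integrableOn_comp_preimage hemb
      (f := fun u : ℝ => u ^ p) (s := Ioi (x - c))).mpr
      (integrableOn_Ioi_rpow_of_lt hp (by linarith))
    rw [hpre] at this
    exact this
  · have := hmp.setIntegral_preimage_emb hemb (fun u : ℝ => u ^ p) (Ioi (x - c))
    rw [hpre] at this
    rw [this, integral_Ioi_rpow_of_lt hp (by linarith)]
    rw [div_neg, neg_div]

lemma aux_tail_Ioi (c x p : ℝ) (hp : p < -1) (hx : x < c) :
    IntegrableOn (fun y : ℝ => (y - x) ^ p) (Ioi c) volume ∧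
      ∫ y in Ioi c, (y - x) ^ p = (c - x) ^ (p + 1) / (-(p + 1)) := by
  have hmp : MeasurePreserving (fun y : ℝ => y - x) volume volume :=
    measurePreserving_sub_right volume x
  have hemb : MeasurableEmbedding (fun y : ℝ => y - x) :=
    (MeasurableEquiv.subRight x).measurableEmbedding
  have hpre : (fun y : ℝ => y - x) ⁻¹' (Ioi (c - x)) = Ioi c := by
    ext y
    simp only [mem_preimage, mem_Ioi]
    constructor <;> intro <;> linarith
  constructor
  · have := (hmp.integrableOn_comp_preimage hemb
      (f := fun u : ℝ => u ^ p) (s := Ioi (c - x))).mpr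
      (integrableOn_Ioi_rpow_of_lt hp (by linarith))
    rw [hpre] at this
    exact this
  · have := hmp.setIntegral_preimage_emb hemb (fun u : ℝ => u ^ p) (Ioi (c - x))
    rw [hpre] at this
    rw [this, integral_Ioi_rpow_of_lt hp (by linarith)]
    rw [div_neg, neg_div]

lemma aux_Icc_left (z r : ℝ) (hr : -1 < r) (hz : 0 ≤ z) :
    IntervalIntegrable (fun y : ℝ => (z - y) ^ r) volume 0 z ∧
      ∫ y in (0:ℝ)..z, (z - y) ^ r = z ^ (r + 1) / (r + 1) := by
  constructor
  · have := (intervalIntegrable_rpow' hr (a := 0) (b := z)).comp_sub_left z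
    simpa using this.symm
  · rw [integral_comp_sub_left (fun u : ℝ => u ^ r) z]
    simp only [sub_zero, sub_self]
    rw [integral_rpow (Or.inl hr)]
    simp [Real.zero_rpow (by linarith : r + 1 ≠ 0)]

lemma aux_Icc_right (x b r : ℝ) (hr : -1 < r) (hxb : x ≤ b) :
    IntervalIntegrable (fun y : ℝ => (y - x) ^ r) volume x b ∧
      ∫ y in x..b, (y - x) ^ r = (b - x) ^ (r + 1) / (r + 1) := by
  constructor
  · have := (intervalIntegrable_rpow' hr (a := 0) (b := b - x)).comp_sub_right x
    simpa using this
  · rw [integral_comp_sub_right (fun u : ℝ => u ^ r) x]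
    rw [integral_rpow (Or.inl hr)]
    simp [Real.zero_rpow (by linarith : r + 1 ≠ 0)]

lemma aux_abs_Icc (x r : ℝ) (hr : -1 < r) (hx : x ∈ Ioo (0:ℝ) 1) :
    IntegrableOn (fun y : ℝ => |x - y| ^ r) (Icc 0 1) volume ∧
      ∫ y in Icc (0:ℝ) 1, |x - y| ^ r ≤ 2 / (r + 1) := by
  obtain ⟨hx0, hx1⟩ := hx
  have h1 := aux_Icc_left x r hr hx0.le
  have h2 := aux_Icc_right x 1 r hr hx1.le
  have e1 : EqOn (fun y : ℝ => (x - y) ^ r) (fun y : ℝ => |x - y| ^ r) (Icc 0 x) := by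
    intro y hy
    simp only
    rw [abs_of_nonneg (by linarith [hy.2] : (0:ℝ) ≤ x - y)]
  have e2 : EqOn (fun y : ℝ => (y - x) ^ r) (fun y : ℝ => |x - y| ^ r) (Icc x 1) := by
    intro y hy
    simp only
    rw [abs_sub_comm, abs_of_nonneg (by linarith [hy.1] : (0:ℝ) ≤ y - x)]
  have A : IntegrableOn (fun y : ℝ => |x - y| ^ r) (Icc 0 x) volume :=
    ((intervalIntegrable_iff_integrableOn_Icc_of_le hx0.le).1 h1.1).congr_fun e1 measurableSet_Icc
  have B : IntegrableOn (fun y : ℝ => |x - y| ^ r) (Icc x 1) volume :=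
    ((intervalIntegrable_iff_integrableOn_Icc_of_le hx1.le).1 h2.1).congr_fun e2 measurableSet_Icc
  have hint : IntegrableOn (fun y : ℝ => |x - y| ^ r) (Icc 0 1) volume := by
    rw [← Set.Icc_union_Icc_eq_Icc hx0.le hx1.le]
    exact A.union B
  refine ⟨hint, ?_⟩
  have ii1 : IntervalIntegrable (fun y : ℝ => |x - y| ^ r) volume 0 x :=
    (intervalIntegrable_iff_integrableOn_Icc_of_le hx0.le).2 A
  have ii2 : IntervalIntegrable (fun y : ℝ => |x - y| ^ r) volume x 1 :=
    (intervalIntegrable_iff_integrableOn_Icc_of_le hx1.le).2 B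
  have hsplit : ∫ y in Icc (0:ℝ) 1, |x - y| ^ r
      = (∫ y in (0:ℝ)..x, |x - y| ^ r) + ∫ y in x..(1:ℝ), |x - y| ^ r := by
    rw [MeasureTheory.integral_Icc_eq_integral_Ioc,
      ← intervalIntegral.integral_of_le (by norm_num : (0:ℝ) ≤ 1),
      intervalIntegral.integral_add_adjacent_intervals ii1 ii2]
  have v1 : ∫ y in (0:ℝ)..x, |x - y| ^ r = x ^ (r + 1) / (r + 1) := by
    rw [← intervalIntegral.integral_congr (e1.mono (by rw [uIcc_of_le hx0.le])), h1.2]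
  have v2 : ∫ y in x..(1:ℝ), |x - y| ^ r = (1 - x) ^ (r + 1) / (r + 1) := by
    rw [← intervalIntegral.integral_congr (e2.mono (by rw [uIcc_of_le hx1.le])), h2.2]
  rw [hsplit, v1, v2, ← add_div]
  have b1 : x ^ (r + 1) ≤ 1 := Real.rpow_le_one hx0.le hx1.le (by linarith)
  have b2 : (1 - x) ^ (r + 1) ≤ 1 := Real.rpow_le_one (by linarith) (by linarith) (by linarith)
  gcongr
  · linarith
  · linarith

lemma aux_one_sub_Icc (q : ℝ) (hq : -1 < q) :
    IntegrableOn (fun y : ℝ => (1 - y) ^ q) (Icc 0 1) volume ∧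
      ∫ y in Icc (0:ℝ) 1, (1 - y) ^ q = 1 / (q + 1) := by
  have h := aux_Icc_left 1 q hq zero_le_one
  refine ⟨(intervalIntegrable_iff_integrableOn_Icc_of_le zero_le_one).1 h.1, ?_⟩
  rw [MeasureTheory.integral_Icc_eq_integral_Ioc,
    ← intervalIntegral.integral_of_le zero_le_one, h.2, Real.one_rpow]

lemma aux_rpow_Icc (q : ℝ) (hq : -1 < q) :
    IntegrableOn (fun y : ℝ => y ^ q) (Icc 0 1) volume ∧
      ∫ y in Icc (0:ℝ) 1, y ^ q = 1 / (q + 1) := by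
  have h := aux_Icc_right 0 1 q hq zero_le_one
  simp only [sub_zero] at h
  refine ⟨(intervalIntegrable_iff_integrableOn_Icc_of_le zero_le_one).1 h.1, ?_⟩
  rw [MeasureTheory.integral_Icc_eq_integral_Ioc,
    ← intervalIntegral.integral_of_le zero_le_one, h.2, Real.one_rpow]

set_option maxHeartbeats 2000000 in
theorem holder_embeds_into_cameronMartin (H : ℝ) (hH : H ∈ Set.Ioo (1 / 4 : ℝ) (1 / 2))
    (γ : ℝ) (hγ : 1 / 2 - H < γ) :
    ∃ C > 0, ∀ (h : ℝ → ℝ) (K : ℝ), 0 ≤ K → h 0 = 0 →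
      (∀ s ∈ Set.Icc (0 : ℝ) 1, ∀ t ∈ Set.Icc (0 : ℝ) 1,
        |h t - h s| ≤ K * |t - s| ^ γ) →
      Real.sqrt (cmNormSq H h) ≤ C * K := by
  obtain ⟨hH1, hH2⟩ := hH
  have hHpos : (0:ℝ) < H := by linarith
  have hH2' : (0:ℝ) < 1 - 2 * H := by linarith
  set γ' := min γ (1/2 : ℝ) with hγ'def
  have hγ'1 : 1/2 - H < γ' := lt_min hγ (by linarith)
  have hγ'pos : 0 < γ' := by
    have : (0:ℝ) < 1/2 - H := by linarith
    linarith
  have hγ'le : γ' ≤ 1/2 := min_le_right _ _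
  have hγ'γ : γ' ≤ γ := min_le_left _ _
  set a := 2*γ' + 2*H - 2 with ha_def
  have ha1 : (-1:ℝ) < a := by rw [ha_def]; linarith
  have ha0 : a < 0 := by rw [ha_def]; linarith
  set J : ℝ → ℝ := fun x =>
    (Ioo (0:ℝ) 1).indicator
      (fun x => 2/(a+1) + x^(2*H-1)/(1-2*H) + (1-x)^(2*H-1)/(1-2*H)) x
    + (Ioo (1:ℝ) 2).indicator (fun x => (x-1)^(H-1) / H) x
    + (Ioi (2:ℝ)).indicator (fun x => (x-1)^(2*H-2)) x
    + (Ioo (-1:ℝ) 0).indicator (fun x => (-x)^(H-1) / H) x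
    + (Iio (-1:ℝ)).indicator (fun x => (-x)^(2*H-2)) x with hJdef
  have h2H2 : (2*H - 2 : ℝ) < -1 := by linarith
  have hJ1int : IntegrableOn
      (fun x : ℝ => 2/(a+1) + x^(2*H-1)/(1-2*H) + (1-x)^(2*H-1)/(1-2*H))
      (Ioo 0 1) volume := by
    apply Integrable.add
    apply Integrable.add
    · exact integrableOn_const (by simp [Real.volume_Ioo])
    · exact Integrable.div_const ((aux_rpow_Icc (2*H-1) (by linarith)).1.mono_set
        Ioo_subset_Icc_self) _
    · exact Integrable.div_const ((aux_one_sub_Icc (2*H-1) (by linarith)).1.mono_set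
        Ioo_subset_Icc_self) _
  have hJ2int : IntegrableOn (fun x : ℝ => (x-1)^(H-1) / H) (Ioo 1 2) volume := by
    have := (aux_Icc_right 1 2 (H-1) (by linarith) (by norm_num)).1
    exact Integrable.div_const (((intervalIntegrable_iff_integrableOn_Icc_of_le
      (by norm_num)).1 this).mono_set Ioo_subset_Icc_self) _
  have hJ3int : IntegrableOn (fun x : ℝ => (x-1)^(2*H-2)) (Ioi 2) volume :=
    (aux_tail_Ioi 2 1 (2*H-2) h2H2 (by norm_num)).1
  have hJ4int : IntegrableOn (fun x : ℝ => (-x)^(H-1) / H) (Ioo (-1) 0) volume := by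
    have h0 : IntervalIntegrable (fun x : ℝ => (-x)^(H-1)) volume (-1) 0 := by
      have := (intervalIntegrable_rpow' (by linarith : (-1:ℝ) < H-1)
        (a := 0) (b := 1)).comp_sub_left 0
      simpa [zero_sub] using this.symm
    exact Integrable.div_const (((intervalIntegrable_iff_integrableOn_Icc_of_le
      (by norm_num)).1 h0).mono_set Ioo_subset_Icc_self) _
  have hJ5int : IntegrableOn (fun x : ℝ => (-x)^(2*H-2)) (Iio (-1)) volume := by
    have := (aux_tail_Iio 0 (-1) (2*H-2) h2H2 (by norm_num)).1
    simpa [zero_sub] using this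
  have hJint : Integrable J volume := by
    rw [hJdef]
    exact (((((integrable_indicator_iff measurableSet_Ioo).2 hJ1int).add
      ((integrable_indicator_iff measurableSet_Ioo).2 hJ2int)).add
      ((integrable_indicator_iff measurableSet_Ioi).2 hJ3int)).add
      ((integrable_indicator_iff measurableSet_Ioo).2 hJ4int)).add
      ((integrable_indicator_iff measurableSet_Iio).2 hJ5int)
  have hc : (0:ℝ) ≤ H * (1 - 2*H) / 2 := by positivity
  refine ⟨Real.sqrt (H * (1 - 2*H) / 2 * ∫ x, J x) + 1,
    by positivity, ?_⟩
  intro h K hK hh0 hhol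

  -- Hölder bound with the capped exponent γ'
  have hhol' : ∀ s ∈ Icc (0:ℝ) 1, ∀ t ∈ Icc (0:ℝ) 1, |h t - h s| ≤ K * |t - s| ^ γ' := by
    intro s hs t ht
    refine (hhol s hs t ht).trans (mul_le_mul_of_nonneg_left ?_ hK)
    rcases eq_or_ne t s with rfl | hne
    · have hγpos : 0 < γ := by linarith
      simp [Real.zero_rpow hγpos.ne', Real.zero_rpow hγ'pos.ne']
    · have h0 : 0 < |t - s| := abs_pos.2 (sub_ne_zero.2 hne)
      have h1 : |t - s| ≤ 1 := by
        rw [abs_sub_le_iff]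
        constructor
        · linarith [ht.2, hs.1]
        · linarith [hs.2, ht.1]
      exact Real.rpow_le_rpow_of_exponent_ge h0 h1 hγ'γ
  have hKbound : ∀ y ∈ Icc (0:ℝ) 1, |h y| ≤ K := by
    intro y hy
    have hb := hhol' 0 (Set.left_mem_Icc.2 zero_le_one) y hy
    rw [hh0, sub_zero, sub_zero] at hb
    refine hb.trans ?_
    calc K * |y| ^ γ' ≤ K * 1 := by
          refine mul_le_mul_of_nonneg_left ?_ hK
          exact Real.rpow_le_one (abs_nonneg y)
            (by rw [abs_of_nonneg hy.1]; exact hy.2) hγ'pos.le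
      _ = K := mul_one K
  set F : ℝ → ℝ → ℝ := fun x y =>
    (Set.indicator (Set.Icc (0 : ℝ) 1) h x -
        Set.indicator (Set.Icc (0 : ℝ) 1) h y) ^ 2 / |x - y| ^ (2 - 2 * H) with hFdef
  have hcm : cmNormSq H h = H * (1 - 2 * H) / 2 * ∫ x, ∫ y, F x y := rfl
  have hFnn : ∀ x y, 0 ≤ F x y := fun x y =>
    div_nonneg (sq_nonneg _) (Real.rpow_nonneg (abs_nonneg _) _)
  have hsymm : ∀ x y : ℝ, F x y = F y x := by
    intro x y
    simp only [hFdef]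
    rw [abs_sub_comm]
    ring_nf
  have hcross : ∀ x y : ℝ, x ∉ Icc (0:ℝ) 1 → y ∈ Icc (0:ℝ) 1 →
      F x y ≤ K^2 * |x - y| ^ (2*H - 2) := by
    intro x y hx hy
    have hne : x ≠ y := fun e => hx (e ▸ hy)
    have hd : 0 < |x - y| := abs_pos.2 (sub_ne_zero.2 hne)
    have hdp : 0 < |x - y| ^ (2 - 2*H) := Real.rpow_pos_of_pos hd _
    have h1 : F x y = (h y)^2 / |x - y| ^ (2 - 2*H) := by
      simp only [hFdef]
      rw [Set.indicator_of_notMem hx, Set.indicator_of_mem hy]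
      ring_nf
    have h2 : (h y)^2 ≤ K^2 := by
      have hb := hKbound y hy
      calc (h y)^2 = |h y|^2 := (sq_abs _).symm
        _ ≤ K^2 := pow_le_pow_left₀ (abs_nonneg _) hb 2
    rw [h1, show (2*H - 2 : ℝ) = -(2 - 2*H) by ring, Real.rpow_neg (abs_nonneg _),
      ← div_eq_mul_inv]
    gcongr
  have houter : ∀ x : ℝ, x ∉ Icc (0:ℝ) 1 → ∀ φ : ℝ → ℝ,
      IntegrableOn φ (Icc 0 1) volume →
      (∀ᵐ y : ℝ, y ∈ Icc (0:ℝ) 1 → F x y ≤ φ y) →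
      (∫ y, F x y) ≤ ∫ y in Icc (0:ℝ) 1, φ y := by
    intro x hx φ hφ hle
    have hg : Integrable ((Icc (0:ℝ) 1).indicator φ) volume :=
      (integrable_indicator_iff measurableSet_Icc).2 hφ
    have hmono : (∫ y, F x y) ≤ ∫ y, (Icc (0:ℝ) 1).indicator φ y := by
      apply integral_mono_of_nonneg (ae_of_all _ (hFnn x)) hg
      filter_upwards [hle] with y hy
      by_cases hmem : y ∈ Icc (0:ℝ) 1
      · rw [Set.indicator_of_mem hmem]; exact hy hmem
      · rw [Set.indicator_of_notMem hmem]
        have hz : F x y = 0 := by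
          simp only [hFdef]
          rw [Set.indicator_of_notMem hx, Set.indicator_of_notMem hmem]
          simp
        rw [hz]
    rwa [MeasureTheory.integral_indicator measurableSet_Icc] at hmono
  have hNull : ∀ᵐ x : ℝ, x ∉ ({-1, 0, 1, 2} : Set ℝ) := by
    rw [← measure_eq_zero_iff_ae_notMem]
    exact Set.Finite.measure_zero (Set.toFinite _) _
  have hinner : ∀ᵐ x : ℝ, (∫ y, F x y) ≤ K^2 * J x := by
    filter_upwards [hNull] with x hx
    simp only [Set.mem_insert_iff, Set.mem_singleton_iff, not_or] at hx
    obtain ⟨hxm1, hx0, hx1, hx2⟩ := hx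
    rcases lt_trichotomy x (-1) with hA | hA | hA
    · -- x < -1
      have hxout : x ∉ Icc (0:ℝ) 1 := fun hm => absurd hm.1 (by linarith)
      have hJx : J x = (-x)^(2*H-2) := by
        simp only [hJdef]
        rw [Set.indicator_of_notMem (fun hm => absurd hm.1 (by linarith)),
          Set.indicator_of_notMem (fun hm => absurd hm.1 (by linarith)),
          Set.indicator_of_notMem (fun hm => absurd (Set.mem_Ioi.1 hm) (by linarith)),
          Set.indicator_of_notMem (fun hm => absurd hm.1 (by linarith)),
          Set.indicator_of_mem (Set.mem_Iio.2 hA)]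
        ring
      rw [hJx]
      have hφint : IntegrableOn (fun _ : ℝ => K^2 * (-x)^(2*H-2)) (Icc 0 1) volume :=
        integrableOn_const (by simp [Real.volume_Icc])
      refine le_trans (houter x hxout _ hφint ?_) ?_
      · apply ae_of_all
        intro y hy
        refine (hcross x y hxout hy).trans ?_
        have h1 : |x - y| = y - x := by
          rw [abs_sub_comm, abs_of_nonneg (by linarith [hy.1] : (0:ℝ) ≤ y - x)]
        rw [h1]
        refine mul_le_mul_of_nonneg_left ?_ (by positivity)
        exact Real.rpow_le_rpow_of_nonpos (by linarith) (by linarith [hy.1]) (by linarith)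
      · rw [setIntegral_const]
        simp [Real.volume_Icc]
    · exact absurd hA hxm1
    rcases lt_trichotomy x 0 with hB | hB | hB
    · -- -1 < x < 0
      have hxout : x ∉ Icc (0:ℝ) 1 := fun hm => absurd hm.1 (by linarith)
      have hJx : J x = (-x)^(H-1)/H := by
        simp only [hJdef]
        rw [Set.indicator_of_notMem (fun hm => absurd hm.1 (by linarith)),
          Set.indicator_of_notMem (fun hm => absurd hm.1 (by linarith)),
          Set.indicator_of_notMem (fun hm => absurd (Set.mem_Ioi.1 hm) (by linarith)),
          Set.indicator_of_mem (Set.mem_Ioo.2 ⟨hA, hB⟩),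
          Set.indicator_of_notMem (fun hm => absurd (Set.mem_Iio.1 hm) (by linarith))]
        ring
      rw [hJx]
      have hs : (0:ℝ) < -x := by linarith
      have hφint : IntegrableOn (fun y : ℝ => (K^2 * (-x)^(H-1)) * y^(H-1))
          (Icc 0 1) volume := (aux_rpow_Icc (H-1) (by linarith)).1.const_mul _
      refine le_trans (houter x hxout _ hφint ?_) ?_
      · filter_upwards [measure_eq_zero_iff_ae_notMem.mp (measure_singleton (0:ℝ))] with y hy0 hy
        have hy0' : 0 < y := lt_of_le_of_ne hy.1 (fun e => hy0 (by simp [← e]))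
        refine (hcross x y hxout hy).trans ?_
        have h1 : |x - y| = y + (-x) := by
          rw [abs_sub_comm, abs_of_nonneg (by linarith : (0:ℝ) ≤ y - x)]
          ring
        rw [h1, show (2*H-2:ℝ) = 2*(H-1) by ring]
        calc K^2 * (y + (-x))^(2*(H-1)) ≤ K^2 * (y^(H-1) * (-x)^(H-1)) :=
            mul_le_mul_of_nonneg_left
              (aux_add_rpow_le hy0' hs (by linarith)) (by positivity)
          _ = (K^2 * (-x)^(H-1)) * y^(H-1) := by ring
      · rw [MeasureTheory.integral_const_mul, (aux_rpow_Icc (H-1) (by linarith)).2,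
          show (H-1+1:ℝ) = H by ring]
        apply le_of_eq
        ring
    · exact absurd hB hx0
    rcases lt_trichotomy x 1 with hC | hC | hC
    · -- 0 < x < 1 : the main case
      have hxin : x ∈ Icc (0:ℝ) 1 := ⟨by linarith, by linarith⟩
      have hxIoo : x ∈ Ioo (0:ℝ) 1 := ⟨hB, hC⟩
      have hJx : J x = 2/(a+1) + x^(2*H-1)/(1-2*H) + (1-x)^(2*H-1)/(1-2*H) := by
        simp only [hJdef]
        rw [Set.indicator_of_mem hxIoo,
          Set.indicator_of_notMem (fun hm => absurd hm.1 (by linarith)),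
          Set.indicator_of_notMem (fun hm => absurd (Set.mem_Ioi.1 hm) (by linarith)),
          Set.indicator_of_notMem (fun hm => absurd hm.2 (by linarith)),
          Set.indicator_of_notMem (fun hm => absurd (Set.mem_Iio.1 hm) (by linarith))]
        ring
      rw [hJx]
      set g1 : ℝ → ℝ := (Icc (0:ℝ) 1).indicator (fun y => K^2 * |x - y|^a) with hg1
      set g2 : ℝ → ℝ := (Iio (0:ℝ)).indicator (fun y => K^2 * (x - y)^(2*H-2)) with hg2
      set g3 : ℝ → ℝ := (Ioi (1:ℝ)).indicator (fun y => K^2 * (y - x)^(2*H-2)) with hg3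
      have hg1i : Integrable g1 volume := (integrable_indicator_iff measurableSet_Icc).2
        ((aux_abs_Icc x a ha1 hxIoo).1.const_mul _)
      have hg2i : Integrable g2 volume := (integrable_indicator_iff measurableSet_Iio).2
        ((aux_tail_Iio x 0 (2*H-2) h2H2 (by linarith)).1.const_mul _)
      have hg3i : Integrable g3 volume := (integrable_indicator_iff measurableSet_Ioi).2
        ((aux_tail_Ioi 1 x (2*H-2) h2H2 (by linarith)).1.const_mul _)
      have hFle : ∀ y : ℝ, F x y ≤ g1 y + g2 y + g3 y := by
        intro y
        by_cases hmem : y ∈ Icc (0:ℝ) 1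
        · have hg2z : g2 y = 0 := Set.indicator_of_notMem
            (fun hm => absurd (Set.mem_Iio.1 hm) (by linarith [hmem.1])) _
          have hg3z : g3 y = 0 := Set.indicator_of_notMem
            (fun hm => absurd (Set.mem_Ioi.1 hm) (by linarith [hmem.2])) _
          rw [hg2z, hg3z, add_zero, add_zero, hg1, Set.indicator_of_mem hmem]
          rcases eq_or_ne y x with rfl | hne
          · have hz : F y y = 0 := by
              simp only [hFdef]
              simp
            rw [hz]
            positivity
          · have hd : 0 < |x - y| := abs_pos.2 (sub_ne_zero.2 hne.symm)
            have hF1 : F x y = (h x - h y)^2 / |x - y|^(2-2*H) := by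
              simp only [hFdef]
              rw [Set.indicator_of_mem hxin, Set.indicator_of_mem hmem]
            have hnum : (h x - h y)^2 ≤ K^2 * |x - y|^(2*γ') := by
              have hb := hhol' y hmem x hxin
              calc (h x - h y)^2 = |h x - h y|^2 := (sq_abs _).symm
                _ ≤ (K * |x - y|^γ')^2 := pow_le_pow_left₀ (abs_nonneg _) hb 2
                _ = K^2 * (|x - y|^γ')^2 := by ring
                _ = K^2 * |x - y|^(2*γ') := by
                    rw [← Real.rpow_natCast (|x - y|^γ') 2,
                      ← Real.rpow_mul (abs_nonneg _)]
                    norm_num [mul_comm]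
            have hden : 0 < |x - y|^(2-2*H) := Real.rpow_pos_of_pos hd _
            rw [hF1]
            calc (h x - h y)^2 / |x - y|^(2-2*H)
                ≤ (K^2 * |x - y|^(2*γ')) / |x - y|^(2-2*H) := by gcongr
              _ = K^2 * |x - y|^a := by
                  rw [mul_div_assoc, ← Real.rpow_sub hd]
                  congr 1
                  rw [ha_def]
                  ring
        · have hg1z : g1 y = 0 := Set.indicator_of_notMem hmem _
          rw [hg1z, zero_add]
          have hyout : y < 0 ∨ 1 < y := by
            by_contra hcon
            push_neg at hcon
            exact hmem ⟨hcon.1, hcon.2⟩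
          have hFb : F x y ≤ K^2 * |y - x|^(2*H-2) := by
            rw [hsymm x y]
            exact hcross y x (fun hm => by
              rcases hyout with hy | hy
              · exact absurd hm.1 (by linarith)
              · exact absurd hm.2 (by linarith)) hxin
          rcases hyout with hy | hy
          · have habs : |y - x| = x - y := by
              rw [abs_sub_comm]
              exact abs_of_nonneg (by linarith)
            have hg2v : g2 y = K^2 * (x - y)^(2*H-2) :=
              Set.indicator_of_mem (Set.mem_Iio.2 hy) _
            have hg3z : g3 y = 0 := Set.indicator_of_notMem
              (fun hm => absurd (Set.mem_Ioi.1 hm) (by linarith)) _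
            rw [hg2v, hg3z, add_zero]
            rw [habs] at hFb
            exact hFb
          · have habs : |y - x| = y - x := abs_of_nonneg (by linarith)
            have hg3v : g3 y = K^2 * (y - x)^(2*H-2) :=
              Set.indicator_of_mem (Set.mem_Ioi.2 hy) _
            have hg2z : g2 y = 0 := Set.indicator_of_notMem
              (fun hm => absurd (Set.mem_Iio.1 hm) (by linarith)) _
            rw [hg3v, hg2z, zero_add]
            rw [habs] at hFb
            exact hFb
      have hgint : Integrable (fun y => g1 y + g2 y + g3 y) volume := (hg1i.add hg2i).add hg3i
      have hIb : (∫ y, F x y) ≤ ∫ y, (g1 y + g2 y + g3 y) :=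
        integral_mono_of_nonneg (ae_of_all _ (hFnn x)) hgint (ae_of_all _ hFle)
      refine hIb.trans ?_
      have hadd12 : Integrable (fun y => g1 y + g2 y) volume := hg1i.add hg2i
      have hsum : (∫ y, (g1 y + g2 y + g3 y)) = (∫ y, g1 y) + (∫ y, g2 y) + (∫ y, g3 y) := by
        rw [MeasureTheory.integral_add hadd12 hg3i, MeasureTheory.integral_add hg1i hg2i]
      rw [hsum]
      have v1 : ∫ y, g1 y ≤ K^2 * (2/(a+1)) := by
        rw [hg1, MeasureTheory.integral_indicator measurableSet_Icc, MeasureTheory.integral_const_mul]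
        exact mul_le_mul_of_nonneg_left (aux_abs_Icc x a ha1 hxIoo).2 (by positivity)
      have v2 : ∫ y, g2 y = K^2 * (x^(2*H-1)/(1-2*H)) := by
        rw [hg2, MeasureTheory.integral_indicator measurableSet_Iio, MeasureTheory.integral_const_mul,
          (aux_tail_Iio x 0 (2*H-2) h2H2 (by linarith)).2, sub_zero,
          show (2*H-2+1:ℝ) = 2*H-1 by ring, show (-(2*H-1):ℝ) = 1-2*H by ring]
      have v3 : ∫ y, g3 y = K^2 * ((1-x)^(2*H-1)/(1-2*H)) := by
        rw [hg3, MeasureTheory.integral_indicator measurableSet_Ioi, MeasureTheory.integral_const_mul,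
          (aux_tail_Ioi 1 x (2*H-2) h2H2 (by linarith)).2,
          show (2*H-2+1:ℝ) = 2*H-1 by ring, show (-(2*H-1):ℝ) = 1-2*H by ring]
      have hexp : K^2 * (2/(a+1) + x^(2*H-1)/(1-2*H) + (1-x)^(2*H-1)/(1-2*H))
          = K^2*(2/(a+1)) + K^2*(x^(2*H-1)/(1-2*H)) + K^2*((1-x)^(2*H-1)/(1-2*H)) := by
        ring
      rw [hexp, v2, v3]
      linarith [v1]
    · exact absurd hC hx1
    rcases lt_trichotomy x 2 with hD | hD | hD
    · -- 1 < x < 2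
      have hxout : x ∉ Icc (0:ℝ) 1 := fun hm => absurd hm.2 (by linarith)
      have hJx : J x = (x-1)^(H-1)/H := by
        simp only [hJdef]
        rw [Set.indicator_of_notMem (fun hm => absurd hm.2 (by linarith)),
          Set.indicator_of_mem (Set.mem_Ioo.2 ⟨hC, hD⟩),
          Set.indicator_of_notMem (fun hm => absurd (Set.mem_Ioi.1 hm) (by linarith)),
          Set.indicator_of_notMem (fun hm => absurd hm.2 (by linarith)),
          Set.indicator_of_notMem (fun hm => absurd (Set.mem_Iio.1 hm) (by linarith))]
        ring
      rw [hJx]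
      have hs : (0:ℝ) < x - 1 := by linarith
      have hφint : IntegrableOn (fun y : ℝ => (K^2 * (x-1)^(H-1)) * (1-y)^(H-1))
          (Icc 0 1) volume := (aux_one_sub_Icc (H-1) (by linarith)).1.const_mul _
      refine le_trans (houter x hxout _ hφint ?_) ?_
      · filter_upwards [measure_eq_zero_iff_ae_notMem.mp (measure_singleton (1:ℝ))] with y hy1 hy
        have hy1' : y < 1 := lt_of_le_of_ne hy.2 (fun e => hy1 (by simp [e]))
        refine (hcross x y hxout hy).trans ?_
        have h1 : |x - y| = (x-1) + (1-y) := by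
          rw [abs_of_nonneg (by linarith : (0:ℝ) ≤ x - y)]
          ring
        rw [h1, show (2*H-2:ℝ) = 2*(H-1) by ring]
        calc K^2 * ((x-1) + (1-y))^(2*(H-1))
            ≤ K^2 * ((x-1)^(H-1) * (1-y)^(H-1)) :=
            mul_le_mul_of_nonneg_left
              (aux_add_rpow_le hs (by linarith) (by linarith)) (by positivity)
          _ = (K^2 * (x-1)^(H-1)) * (1-y)^(H-1) := by ring
      · rw [MeasureTheory.integral_const_mul, (aux_one_sub_Icc (H-1) (by linarith)).2,
          show (H-1+1:ℝ) = H by ring]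
        apply le_of_eq
        ring
    · exact absurd hD hx2
    · -- 2 < x
      have hxout : x ∉ Icc (0:ℝ) 1 := fun hm => absurd hm.2 (by linarith)
      have hJx : J x = (x-1)^(2*H-2) := by
        simp only [hJdef]
        rw [Set.indicator_of_notMem (fun hm => absurd hm.2 (by linarith)),
          Set.indicator_of_notMem (fun hm => absurd hm.2 (by linarith)),
          Set.indicator_of_mem (Set.mem_Ioi.2 hD),
          Set.indicator_of_notMem (fun hm => absurd hm.2 (by linarith)),
          Set.indicator_of_notMem (fun hm => absurd (Set.mem_Iio.1 hm) (by linarith))]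
        ring
      rw [hJx]
      have hφint : IntegrableOn (fun _ : ℝ => K^2 * (x-1)^(2*H-2)) (Icc 0 1) volume :=
        integrableOn_const (by simp [Real.volume_Icc])
      refine le_trans (houter x hxout _ hφint ?_) ?_
      · apply ae_of_all
        intro y hy
        refine (hcross x y hxout hy).trans ?_
        have h1 : |x - y| = x - y := abs_of_nonneg (by linarith [hy.2])
        rw [h1]
        refine mul_le_mul_of_nonneg_left ?_ (by positivity)
        exact Real.rpow_le_rpow_of_nonpos (by linarith) (by linarith [hy.2]) (by linarith)
      · rw [setIntegral_const]
        simp [Real.volume_Icc]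
  have hS : (∫ x, ∫ y, F x y) ≤ K^2 * ∫ x, J x := by
    have hmono := integral_mono_of_nonneg
      (ae_of_all _ fun x => integral_nonneg (hFnn x)) (hJint.const_mul (K^2)) hinner
    rwa [MeasureTheory.integral_const_mul] at hmono
  have hcmle : cmNormSq H h ≤ K^2 * (H * (1 - 2*H) / 2 * ∫ x, J x) := by
    rw [hcm]
    calc H * (1 - 2 * H) / 2 * ∫ x, ∫ y, F x y
        ≤ H * (1 - 2 * H) / 2 * (K^2 * ∫ x, J x) := mul_le_mul_of_nonneg_left hS hc
      _ = K^2 * (H * (1 - 2*H) / 2 * ∫ x, J x) := by ring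
  calc Real.sqrt (cmNormSq H h)
      ≤ Real.sqrt (K^2 * (H * (1 - 2*H) / 2 * ∫ x, J x)) := Real.sqrt_le_sqrt hcmle
    _ = K * Real.sqrt (H * (1 - 2*H) / 2 * ∫ x, J x) := by
        rw [Real.sqrt_mul (sq_nonneg K), Real.sqrt_sq hK]
    _ ≤ (Real.sqrt (H * (1 - 2*H) / 2 * ∫ x, J x) + 1) * K := by
        nlinarith [Real.sqrt_nonneg (H * (1 - 2*H) / 2 * ∫ x, J x)]
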